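/- Let N, k ≥ 1 be integers, and let z : ℝ^N → ℝ be measurable with 1 < z₋ ≤ z(x) ≤ z₊ < ∞ for a.e. x ∈ ℝ^N (with Lebesgue measure). Let (η_n) and η be measurable functions from ℝ^N to ℝ^k such that η_n(x) → η(x) for a.e. x ∈ ℝ^N and sup_n ∫_{ℝ^N} |η_n(x)|^{z(x)} dx < ∞. Then, with z'(x) = z(x)/(z(x)−1), the integral over the region where 1 < z(x) < 2 satisfies ∫_{{x ∈ ℝ^N : 1 < z(x) < 2}} | |η_n(x)|^{z(x)−2} η_n(x) − |η_n(x)−η(x)|^{z(x)−2} (η_n(x)−η(x)) − |η(x)|^{z(x)−2} η(x) |^{z'(x)} dx → 0 as n → ∞. -/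

import Mathlib

/-!
For `1 < p ≤ 2` the map `T u = ‖u‖^(p-2) • u` is `(p-1)`-Hölder with constant `2`, so the
defect `T u - T (u - w) - T w` is bounded both by `3 ‖w‖^(p-1)` and by `3 ‖u - w‖^(p-1)`.
Since `(p - 1) p' = p`, the first bound, raised to `p' = p/(p-1) ≤ zm/(zm-1)`, dominates the
integrand by a multiple of `‖η‖^z`, which is integrable by Fatou's lemma; the second bound makes
the integrand tend to `0` pointwise. Dominated convergence concludes.
-/

open MeasureTheory Filter Topology

section DualityMap

variable {E : Type*} [NormedAddCommGroup E] [NormedSpace ℝ E] {p : ℝ}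

lemma rpow_sub_two_mul_self (hp : 1 < p) {a : ℝ} (ha : 0 ≤ a) :
    a ^ (p - 2) * a = a ^ (p - 1) := by
  rcases ha.eq_or_lt with rfl | ha
  · simp [Real.zero_rpow (by linarith : p - 1 ≠ 0)]
  · rw [← Real.rpow_add_one ha.ne']; ring_nf

lemma norm_rpow_sub_two_smul (hp : 1 < p) (u : E) :
    ‖(‖u‖ ^ (p - 2)) • u‖ = ‖u‖ ^ (p - 1) := by
  rw [norm_smul, Real.norm_of_nonneg (by positivity), rpow_sub_two_mul_self hp (norm_nonneg u)]

lemma rpow_sub_two_mul_le_rpow_sub_one (hp1 : 1 < p) (hp2 : p ≤ 2) {a c : ℝ}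
    (hc : 0 ≤ c) (hca : c ≤ a) : a ^ (p - 2) * c ≤ c ^ (p - 1) := by
  rcases hc.eq_or_lt with rfl | hc
  · simp [Real.zero_rpow (by linarith : p - 1 ≠ 0)]
  rw [← rpow_sub_two_mul_self hp1 hc.le]
  exact mul_le_mul_of_nonneg_right (Real.rpow_le_rpow_of_nonpos hc hca (by linarith)) hc.le

lemma norm_rpow_smul_sub_rpow_smul_le_of_norm_le (hp1 : 1 < p) (hp2 : p ≤ 2) {u v : E}
    (hvu : ‖v‖ ≤ ‖u‖) :
    ‖(‖u‖ ^ (p - 2)) • u - (‖v‖ ^ (p - 2)) • v‖ ≤ 2 * ‖u - v‖ ^ (p - 1) := by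
  rcases le_or_gt ‖u‖ ‖u - v‖ with h | h
  · calc ‖(‖u‖ ^ (p - 2)) • u - (‖v‖ ^ (p - 2)) • v‖
        ≤ ‖u‖ ^ (p - 1) + ‖v‖ ^ (p - 1) := by
          rw [← norm_rpow_sub_two_smul hp1 u, ← norm_rpow_sub_two_smul hp1 v]
          exact norm_sub_le _ _
      _ ≤ ‖u - v‖ ^ (p - 1) + ‖u - v‖ ^ (p - 1) := by gcongr; exact hvu.trans h
      _ = 2 * ‖u - v‖ ^ (p - 1) := by ring
  have hv : 0 < ‖v‖ := by
    refine norm_pos_iff.2 fun hv => ?_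
    simp [hv] at h
  set A := ‖u‖ ^ (p - 2)
  set B := ‖v‖ ^ (p - 2)
  -- Near the diagonal `(B - A) ‖v‖ ≤ A (‖u‖ - ‖v‖) ≤ A ‖u - v‖ ≤ ‖u - v‖^(p-1)`.
  have hAB : A ≤ B := Real.rpow_le_rpow_of_nonpos hv hvu (by linarith)
  have hAc : A * ‖u - v‖ ≤ ‖u - v‖ ^ (p - 1) :=
    rpow_sub_two_mul_le_rpow_sub_one hp1 hp2 (norm_nonneg _) h.le
  have hBA : B * ‖v‖ ≤ A * ‖u‖ := by
    rw [rpow_sub_two_mul_self hp1 hv.le, rpow_sub_two_mul_self hp1 (norm_nonneg u)]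
    exact Real.rpow_le_rpow hv.le hvu (by linarith)
  have huv : A * (‖u‖ - ‖v‖) ≤ A * ‖u - v‖ :=
    mul_le_mul_of_nonneg_left (norm_sub_norm_le u v) (by positivity)
  calc ‖A • u - B • v‖ = ‖A • (u - v) + (A - B) • v‖ := by
        rw [smul_sub, sub_smul]; abel_nf
    _ ≤ A * ‖u - v‖ + (B - A) * ‖v‖ := by
        refine (norm_add_le _ _).trans_eq ?_
        rw [norm_smul, norm_smul, Real.norm_of_nonneg (by positivity), Real.norm_eq_abs,
          abs_of_nonpos (by linarith), neg_sub]
    _ ≤ 2 * ‖u - v‖ ^ (p - 1) := by linarith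

lemma norm_rpow_smul_sub_rpow_smul_le (hp1 : 1 < p) (hp2 : p ≤ 2) (u v : E) :
    ‖(‖u‖ ^ (p - 2)) • u - (‖v‖ ^ (p - 2)) • v‖ ≤ 2 * ‖u - v‖ ^ (p - 1) := by
  rcases le_total ‖v‖ ‖u‖ with h | h
  · exact norm_rpow_smul_sub_rpow_smul_le_of_norm_le hp1 hp2 h
  · rw [norm_sub_rev, norm_sub_rev u v]
    exact norm_rpow_smul_sub_rpow_smul_le_of_norm_le hp1 hp2 h


noncomputable def brezisLiebDefect (p : ℝ) (u w : E) : E :=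
  (‖u‖ ^ (p - 2)) • u - (‖u - w‖ ^ (p - 2)) • (u - w) - (‖w‖ ^ (p - 2)) • w

lemma norm_brezisLiebDefect_le_norm_rpow (hp1 : 1 < p) (hp2 : p ≤ 2) (u w : E) :
    ‖brezisLiebDefect p u w‖ ≤ 3 * ‖w‖ ^ (p - 1) := by
  calc ‖brezisLiebDefect p u w‖
      ≤ ‖(‖u‖ ^ (p - 2)) • u - (‖u - w‖ ^ (p - 2)) • (u - w)‖ + ‖(‖w‖ ^ (p - 2)) • w‖ :=
        norm_sub_le _ _
    _ ≤ 2 * ‖u - (u - w)‖ ^ (p - 1) + ‖w‖ ^ (p - 1) :=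
        add_le_add (norm_rpow_smul_sub_rpow_smul_le hp1 hp2 _ _)
          (norm_rpow_sub_two_smul hp1 w).le
    _ = 3 * ‖w‖ ^ (p - 1) := by rw [sub_sub_cancel]; ring

lemma norm_brezisLiebDefect_le_norm_sub_rpow (hp1 : 1 < p) (hp2 : p ≤ 2) (u w : E) :
    ‖brezisLiebDefect p u w‖ ≤ 3 * ‖u - w‖ ^ (p - 1) := by
  calc ‖brezisLiebDefect p u w‖
      = ‖((‖u‖ ^ (p - 2)) • u - (‖w‖ ^ (p - 2)) • w) - (‖u - w‖ ^ (p - 2)) • (u - w)‖ := by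
        rw [brezisLiebDefect, sub_right_comm]
    _ ≤ 2 * ‖u - w‖ ^ (p - 1) + ‖u - w‖ ^ (p - 1) :=
        (norm_sub_le _ _).trans (add_le_add (norm_rpow_smul_sub_rpow_smul_le hp1 hp2 _ _)
          (norm_rpow_sub_two_smul hp1 _).le)
    _ = 3 * ‖u - w‖ ^ (p - 1) := by ring

lemma norm_brezisLiebDefect_rpow_le {m : ℝ} (hm : 1 < m) (hmp : m ≤ p) (hp2 : p ≤ 2)
    (u w : E) : ‖brezisLiebDefect p u w‖ ^ (p / (p - 1)) ≤ 3 ^ (m / (m - 1)) * ‖w‖ ^ p := by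
  have hp : 1 < p := hm.trans_le hmp
  have hq : p / (p - 1) ≤ m / (m - 1) := by
    rw [div_le_div_iff₀ (by linarith) (by linarith)]
    linarith
  calc ‖brezisLiebDefect p u w‖ ^ (p / (p - 1))
      ≤ (3 * ‖w‖ ^ (p - 1)) ^ (p / (p - 1)) := by
        gcongr
        exact norm_brezisLiebDefect_le_norm_rpow hp hp2 u w
    _ = 3 ^ (p / (p - 1)) * ‖w‖ ^ p := by
        rw [Real.mul_rpow (by norm_num) (by positivity), ← Real.rpow_mul (norm_nonneg w),
          mul_div_cancel₀ _ (by linarith)]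
    _ ≤ 3 ^ (m / (m - 1)) * ‖w‖ ^ p := by
        gcongr
        norm_num

lemma tendsto_norm_brezisLiebDefect_rpow (hp1 : 1 < p) (hp2 : p ≤ 2) {u : ℕ → E} {w : E}
    (hu : Tendsto u atTop (𝓝 w)) :
    Tendsto (fun n => ‖brezisLiebDefect p (u n) w‖ ^ (p / (p - 1))) atTop (𝓝 0) := by
  have hq : 0 < p / (p - 1) := div_pos (by linarith) (by linarith)
  have hsub : Tendsto (fun n => 3 * ‖u n - w‖ ^ (p - 1)) atTop (𝓝 0) := by
    simpa [Real.zero_rpow (by linarith : p - 1 ≠ 0)] using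
      ((tendsto_iff_norm_sub_tendsto_zero.1 hu).rpow_const
        (Or.inr (by linarith : (0 : ℝ) ≤ p - 1))).const_mul 3
  have hdefect : Tendsto (fun n => ‖brezisLiebDefect p (u n) w‖) atTop (𝓝 0) :=
    squeeze_zero (fun n => norm_nonneg _)
      (fun n => norm_brezisLiebDefect_le_norm_sub_rpow hp1 hp2 (u n) w) hsub
  simpa [Real.zero_rpow hq.ne'] using hdefect.rpow_const (Or.inr hq.le)

end DualityMap

lemma integrable_of_tendsto_of_integral_le {α : Type*} [MeasurableSpace α] {μ : Measure α}
    {f : ℕ → α → ℝ} {g : α → ℝ} {C : ℝ} (hf : ∀ n, Integrable (f n) μ)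
    (hf0 : ∀ n, 0 ≤ᵐ[μ] f n) (hfg : ∀ᵐ x ∂μ, Tendsto (fun n => f n x) atTop (𝓝 (g x)))
    (hC : ∀ n, ∫ x, f n x ∂μ ≤ C) : Integrable g μ := by
  refine ⟨aestronglyMeasurable_of_tendsto_ae _ (fun n => (hf n).1) hfg, ?_⟩
  have hbound : ∀ n, ∫⁻ x, ‖f n x‖ₑ ∂μ ≤ ENNReal.ofReal C := fun n => by
    rw [← ofReal_integral_norm_eq_lintegral_enorm (hf n),
      integral_congr_ae ((hf0 n).mono fun x hx => Real.norm_of_nonneg hx)]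
    exact ENNReal.ofReal_le_ofReal (hC n)
  calc ∫⁻ x, ‖g x‖ₑ ∂μ = ∫⁻ x, liminf (fun n => ‖f n x‖ₑ) atTop ∂μ :=
        lintegral_congr_ae (hfg.mono fun x hx => hx.enorm.liminf_eq.symm)
    _ ≤ liminf (fun n => ∫⁻ x, ‖f n x‖ₑ ∂μ) atTop :=
        lintegral_liminf_le' fun n => (hf n).1.aemeasurable.enorm
    _ ≤ ENNReal.ofReal C := liminf_le_of_frequently_le' (.of_forall hbound)
    _ < ⊤ := ENNReal.ofReal_lt_top

theorem brezis_lieb_third_version_region_one_general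
    (N k : ℕ)
    (z : EuclideanSpace ℝ (Fin N) → ℝ) (hz : Measurable z)
    (zm zp : ℝ) (hzm : 1 < zm)
    (hzbound : ∀ᵐ x : EuclideanSpace ℝ (Fin N), zm ≤ z x ∧ z x ≤ zp)
    (η : ℕ → EuclideanSpace ℝ (Fin N) → EuclideanSpace ℝ (Fin k))
    (ηlim : EuclideanSpace ℝ (Fin N) → EuclideanSpace ℝ (Fin k))
    (hηm : ∀ n, Measurable (η n)) (hηlimm : Measurable ηlim)
    (hconv : ∀ᵐ x : EuclideanSpace ℝ (Fin N),
      Tendsto (fun n => η n x) atTop (𝓝 (ηlim x)))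
    (hint : ∀ n, Integrable (fun x => ‖η n x‖ ^ z x))
    (hsup : ∃ C : ℝ, ∀ n, ∫ x, ‖η n x‖ ^ z x ≤ C) :
    Tendsto
      (fun n => ∫ x in {x : EuclideanSpace ℝ (Fin N) | 1 < z x ∧ z x < 2},
        ‖(‖η n x‖ ^ (z x - 2)) • η n x
          - (‖η n x - ηlim x‖ ^ (z x - 2)) • (η n x - ηlim x)
          - (‖ηlim x‖ ^ (z x - 2)) • ηlim x‖ ^ (z x / (z x - 1)))
      atTop (𝓝 0) := by
  obtain ⟨C, hC⟩ := hsup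
  set S := {x : EuclideanSpace ℝ (Fin N) | 1 < z x ∧ z x < 2}
  have hS : MeasurableSet S := by measurability
  have hlim_int : Integrable fun x => ‖ηlim x‖ ^ z x := by
    refine integrable_of_tendsto_of_integral_le hint
      (fun n => .of_forall fun x => by positivity) ?_ hC
    filter_upwards [hconv, hzbound] with x hx hzx
    exact hx.norm.rpow_const (Or.inr (by linarith [hzx.1]))
  have hdom := tendsto_integral_of_dominated_convergence (μ := volume.restrict S)
    (F := fun n x => ‖brezisLiebDefect (z x) (η n x) (ηlim x)‖ ^ (z x / (z x - 1)))
    (fun x => 3 ^ (zm / (zm - 1)) * ‖ηlim x‖ ^ z x)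
    (fun n => Measurable.aestronglyMeasurable (by unfold brezisLiebDefect; fun_prop))
    (hlim_int.const_mul _).restrict
    (fun n => by
      filter_upwards [ae_restrict_of_ae hzbound, ae_restrict_mem hS] with x hzx hxS
      rw [Real.norm_of_nonneg (by positivity)]
      exact norm_brezisLiebDefect_rpow_le hzm hzx.1 hxS.2.le _ _)
    (by
      filter_upwards [ae_restrict_of_ae hconv, ae_restrict_mem hS] with x hx hxS
      exact tendsto_norm_brezisLiebDefect_rpow hxS.1 hxS.2.le hx)
  rw [integral_zero] at hdom
  exact hdom

/-- Brezis–Lieb lemma, third version, for variable exponents. -/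
theorem brezis_lieb_third_version_region_one
    (N k : ℕ) (hN : 1 ≤ N) (hk : 1 ≤ k)
    (z : EuclideanSpace ℝ (Fin N) → ℝ) (hz : Measurable z)
    (zm zp : ℝ) (hzm : 1 < zm)
    (hzbound : ∀ᵐ x : EuclideanSpace ℝ (Fin N), zm ≤ z x ∧ z x ≤ zp)
    (η : ℕ → EuclideanSpace ℝ (Fin N) → EuclideanSpace ℝ (Fin k))
    (ηlim : EuclideanSpace ℝ (Fin N) → EuclideanSpace ℝ (Fin k))
    (hηm : ∀ n, Measurable (η n)) (hηlimm : Measurable ηlim)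
    (hconv : ∀ᵐ x : EuclideanSpace ℝ (Fin N),
      Tendsto (fun n => η n x) atTop (𝓝 (ηlim x)))
    (hint : ∀ n, Integrable (fun x => ‖η n x‖ ^ z x))
    (hsup : ∃ C : ℝ, ∀ n, ∫ x, ‖η n x‖ ^ z x ≤ C) :
    Tendsto
      (fun n => ∫ x in {x : EuclideanSpace ℝ (Fin N) | 1 < z x ∧ z x < 2},
        ‖(‖η n x‖ ^ (z x - 2)) • η n x
          - (‖η n x - ηlim x‖ ^ (z x - 2)) • (η n x - ηlim x)
          - (‖ηlim x‖ ^ (z x - 2)) • ηlim x‖ ^ (z x / (z x - 1)))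
      atTop (𝓝 0) :=
  brezis_lieb_third_version_region_one_general N k z hz zm zp hzm hzbound η ηlim hηm hηlimm hconv
    hint hsup
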